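/- Let c be a real number, λ > 0, and β0, β1 real with β0·β1 > λ and √λ·|β0−β1| < β0β1 − λ. Then a* > 1−c if and only if β0 − β1 > ((β0β1−λ)/√λ)·tanh(√λ·(1−c)), and a* < 0 if and only if β0 − β1 < −((β0β1−λ)/√λ)·tanh(√λ·(1−c)). -/

import Mathlib

/-- The real inverse hyperbolic tangent, `artanh x = (1/2) ln((1+x)/(1-x))`,
the inverse of `tanh` on `(-1, 1)`. -/
noncomputable def artanh (x : ℝ) : ℝ := (1 / 2) * Real.log ((1 + x) / (1 - x))

/-- The critical point `a*`, the unique zero of `g`. -/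
noncomputable def aStar (c β0 β1 lam : ℝ) : ℝ :=
  (1 / (2 * Real.sqrt lam)) * artanh (Real.sqrt lam * (β1 - β0) / (lam - β0 * β1))
    + (1 - c) / 2

lemma tanh_eq_exp (t : ℝ) :
    Real.tanh t = (Real.exp (2 * t) - 1) / (Real.exp (2 * t) + 1) := by
  have h1 : Real.exp t ≠ 0 := Real.exp_ne_zero t
  have h2 : (0:ℝ) < Real.exp t + Real.exp (-t) := by positivity
  have h3 : (0:ℝ) < Real.exp (2 * t) + 1 := by positivity
  rw [Real.tanh_eq_sinh_div_cosh, Real.sinh_eq, Real.cosh_eq]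
  rw [div_eq_div_iff (by positivity) h3.ne']
  have he : Real.exp (2 * t) = Real.exp t * Real.exp t := by
    rw [← Real.exp_add]; ring_nf
  have h4 : Real.exp (-t) = (Real.exp t)⁻¹ := Real.exp_neg t
  field_simp [he, h4]
  have h5 : Real.exp t * (Real.exp t)⁻¹ = 1 := mul_inv_cancel₀ h1
  rw [show t * 2 = 2 * t by ring, he, h4]
  linear_combination (-2 * Real.exp t) * h5

lemma lt_artanh_iff {x : ℝ} (h1 : -1 < x) (h2 : x < 1) (t : ℝ) :
    t < artanh x ↔ Real.tanh t < x := by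
  have hy : (0 : ℝ) < (1 + x) / (1 - x) := by
    apply div_pos <;> linarith
  have hE : (0 : ℝ) < Real.exp (2 * t) := Real.exp_pos _
  rw [artanh, tanh_eq_exp]
  rw [show t < 1 / 2 * Real.log ((1 + x) / (1 - x)) ↔
      2 * t < Real.log ((1 + x) / (1 - x)) by constructor <;> intro h <;> linarith,
    Real.lt_log_iff_exp_lt hy, lt_div_iff₀ (by linarith : (0:ℝ) < 1 - x),
    div_lt_iff₀ (by positivity : (0:ℝ) < Real.exp (2*t) + 1)]
  constructor <;> intro h <;> nlinarith

lemma artanh_lt_iff {x : ℝ} (h1 : -1 < x) (h2 : x < 1) (t : ℝ) :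
    artanh x < t ↔ x < Real.tanh t := by
  have hax : artanh (-x) = -artanh x := by
    unfold artanh
    rw [show (1 + -x) / (1 - -x) = ((1 + x) / (1 - x))⁻¹ by
      rw [inv_div]; ring_nf, Real.log_inv]
    ring
  have h := lt_artanh_iff (x := -x) (by linarith) (by linarith) (-t)
  rw [hax, Real.tanh_neg] at h
  rw [neg_lt_neg_iff, neg_lt_neg_iff] at h
  exact h

theorem stmt15 (c lam β0 β1 : ℝ) (hlam : 0 < lam) (hgt : lam < β0 * β1)
    (hlt : Real.sqrt lam * |β0 - β1| < β0 * β1 - lam) :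
    (1 - c < aStar c β0 β1 lam ↔
      ((β0 * β1 - lam) / Real.sqrt lam) * Real.tanh (Real.sqrt lam * (1 - c)) < β0 - β1) ∧
    (aStar c β0 β1 lam < 0 ↔
      β0 - β1 < -(((β0 * β1 - lam) / Real.sqrt lam) * Real.tanh (Real.sqrt lam * (1 - c)))) := by
  set s := Real.sqrt lam with hs
  have hspos : 0 < s := Real.sqrt_pos.mpr hlam
  have hsne : s ≠ 0 := hspos.ne'
  have hs2 : s * s = lam := Real.mul_self_sqrt hlam.le
  set D := β0 * β1 - lam with hD
  have hDpos : 0 < D := by simp only [hD]; linarith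
  set x := s * (β1 - β0) / (lam - β0 * β1) with hx
  have hxeq : x = s * (β0 - β1) / D := by
    rw [hx, hD]; rw [div_eq_div_iff (by linarith) (by linarith)]; ring
  have habs : |s * (β0 - β1)| < D := by
    rwa [abs_mul, abs_of_pos hspos]
  obtain ⟨habs1, habs2⟩ := abs_lt.mp habs
  have hx1 : -1 < x := by
    rw [hxeq, lt_div_iff₀ hDpos]; linarith
  have hx2 : x < 1 := by
    rw [hxeq, div_lt_one hDpos]; linarith
  have hmain : aStar c β0 β1 lam = (artanh x + s * (1 - c)) / (2 * s) := by
    show (1 / (2 * s)) * artanh x + (1 - c) / 2 = _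
    field_simp
  set T := s * (1 - c) with hT
  set A := artanh x with hA
  constructor
  · rw [hmain, lt_div_iff₀ (by positivity : (0:ℝ) < 2 * s)]
    have h1 : (1 - c) * (2 * s) < A + T ↔ T < A := by
      constructor <;> intro h <;> [nlinarith; nlinarith]
    rw [h1, hA, lt_artanh_iff hx1 hx2, hxeq, lt_div_iff₀ hDpos,
      show D / s * Real.tanh T = D * Real.tanh T / s by ring, div_lt_iff₀ hspos]
    constructor <;> intro h <;> nlinarith
  · rw [hmain, div_lt_iff₀ (by positivity : (0:ℝ) < 2 * s), zero_mul]
    have h1 : A + T < 0 ↔ A < -T := by constructor <;> intro h <;> linarith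
    rw [h1, hA, artanh_lt_iff hx1 hx2, Real.tanh_neg, hxeq, div_lt_iff₀ hDpos,
      show -(D / s * Real.tanh T) = -(D * Real.tanh T) / s by ring, lt_div_iff₀ hspos]
    constructor <;> intro h <;> nlinarith
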